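/- For every irreducible fraction p/q with p even, p ≥ 0, q > 0, there exists a non-negative integer m such that the m-th iterate of the mother map applied to p/q equals 0, i.e., M^m(p/q) = 0/1. Moreover m ≤ p + q. -/

import Mathlib

/-!
Let `p/q = [a_0, …, a_n]` be the standard expansion and `(P, Q)` the pair of
`[a_0, …, a_{n-1}]`. The continued-fraction pair is affine in the last entry, so the mother is
`(p - 2P)/(q - 2Q)`. Consecutive convergents have determinant `±1`, hence both `(P, Q)` and the
mother's pair are coprime; all entries are nonnegative, the new numerator is still even, and so
the new denominator cannot be `0` (its numerator would be `±1`). As `(P, Q) ≠ (0, 0)`, the size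
`p + q` drops at each step, and induction on it reaches `0/q = 0`. The mother is
well defined because the standard expansion is unique, by the usual floor recursion.
-/

/-- Evaluate the continued fraction `[a_0, …, a_{n-1}, x]` projectively:
the pair `(u, w)` represents the fraction `u/w` (with `(±1, 0)` representing
`∞`), and `[a, rest] = a + 1/rest` corresponds to `(u,w) ↦ (a*u + w, u)`. -/
def cfFold (l : List ℤ) (x : ℤ × ℤ) : ℤ × ℤ :=
  l.foldr (fun a y => (a * y.1 + y.2, y.1)) x

/-- The coprime pair `(numerator, denominator)` of the continued fraction
`[a_0, …, a_n]`; the empty continued fraction is `∞ = (1, 0)`. -/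
def cfPair (l : List ℤ) : ℤ × ℤ :=
  cfFold l (1, 0)

/-- The rational number represented by a pair. -/
def pairQ (x : ℤ × ℤ) : ℚ :=
  (x.1 : ℚ) / (x.2 : ℚ)

/-- The value of the continued fraction `[a_0, …, a_n]` as a rational number. -/
def cfVal (l : List ℤ) : ℚ :=
  pairQ (cfPair l)

/-- `l = [a_0, …, a_n]` is a standard continued fraction expansion:
`a_0 ≥ 0`, `a_i ≥ 1` for `1 ≤ i ≤ n`, and `a_n ≥ 2`. -/
def IsStdCF (l : List ℤ) : Prop :=
  l ≠ [] ∧ 0 ≤ l.head! ∧ (∀ b ∈ l.tail, 1 ≤ b) ∧ 2 ≤ l.getLast!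

/-- `m` is the mother of `x`: if `x = [a_0, …, a_n]` is the standard
continued fraction expansion, then `m = [a_0, …, a_{n-1}, a_n - 2]`. -/
def IsMother (x m : ℚ) : Prop :=
  ∃ (l : List ℤ) (a : ℤ), IsStdCF (l ++ [a]) ∧
    x = cfVal (l ++ [a]) ∧ m = cfVal (l ++ [a - 2])

open Classical in
/-- The mother map `M`, as a function (defaulting to `0` where undefined). -/
noncomputable def motherFun (x : ℚ) : ℚ :=
  if h : ∃ m, IsMother x m then h.choose else 0

@[simp]
lemma cfFold_nil (x : ℤ × ℤ) : cfFold [] x = x := rfl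

@[simp]
lemma cfFold_cons (a : ℤ) (l : List ℤ) (x : ℤ × ℤ) :
    cfFold (a :: l) x = (a * (cfFold l x).1 + (cfFold l x).2, (cfFold l x).1) := rfl

lemma cfFold_append (l l' : List ℤ) (x : ℤ × ℤ) :
    cfFold (l ++ l') x = cfFold l (cfFold l' x) :=
  List.foldr_append

lemma cfFold_smul_add (l : List ℤ) (c : ℤ) (x y : ℤ × ℤ) :
    cfFold l (c • x + y) = c • cfFold l x + cfFold l y := by
  induction l with
  | nil => rfl
  | cons a l ih =>
    simp only [cfFold_cons, ih, Prod.ext_iff, Prod.fst_add, Prod.snd_add, Prod.smul_fst,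
      Prod.smul_snd, smul_eq_mul, and_true]
    ring

lemma cfPair_concat (l : List ℤ) (a : ℤ) : cfPair (l ++ [a]) = cfFold l (a, 1) := by
  simp [cfPair, cfFold_append]

lemma cfFold_nonneg {l : List ℤ} (hl : ∀ b ∈ l, 0 ≤ b) {x : ℤ × ℤ} (hx : 0 ≤ x) :
    0 ≤ cfFold l x := by
  induction l with
  | nil => exact hx
  | cons a l ih =>
    have ha : 0 ≤ a := hl a List.mem_cons_self
    obtain ⟨h1, h2⟩ := ih fun b hb => hl b (List.mem_cons_of_mem a hb)
    exact ⟨add_nonneg (mul_nonneg ha h1) h2, h1⟩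

def pairDet {R : Type*} [CommRing R] (x y : R × R) : R := x.1 * y.2 - x.2 * y.1

lemma pairDet_cfFold (l : List ℤ) (x y : ℤ × ℤ) :
    pairDet (cfFold l x) (cfFold l y) = (-1) ^ l.length * pairDet x y := by
  induction l with
  | nil => simp
  | cons a l ih =>
    simp only [pairDet, cfFold_cons, List.length_cons, pow_succ] at ih ⊢
    linear_combination -ih

lemma IsCoprime.of_isUnit_pairDet {R : Type*} [CommRing R] {x y : R × R}
    (h : IsUnit (pairDet x y)) : IsCoprime x.1 x.2 := by
  obtain ⟨u, hu⟩ := h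
  refine ⟨↑u⁻¹ * y.2, -(↑u⁻¹ * y.1), ?_⟩
  simp only [pairDet] at hu
  linear_combination (-(↑u⁻¹ : R)) * hu + Units.inv_mul u

lemma isStdCF_singleton {a : ℤ} : IsStdCF [a] ↔ 2 ≤ a := by
  simp [IsStdCF]
  omega

lemma isStdCF_cons_cons {a b : ℤ} {s : List ℤ} :
    IsStdCF (a :: b :: s) ↔ 0 ≤ a ∧ 1 ≤ b ∧ IsStdCF (b :: s) := by
  simp [IsStdCF]
  grind

lemma IsStdCF.nonneg {l : List ℤ} (hl : IsStdCF l) : ∀ b ∈ l, 0 ≤ b := by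
  obtain ⟨hne, h0, h1, -⟩ := hl
  rcases l with _ | ⟨a, l⟩
  · exact absurd rfl hne
  · simp only [List.mem_cons, forall_eq_or_imp]
    exact ⟨h0, fun b hb => zero_le_one.trans (h1 b hb)⟩

lemma IsStdCF.two_le_getLast {l : List ℤ} {a : ℤ} (hl : IsStdCF (l ++ [a])) : 2 ≤ a := by
  simpa using hl.2.2.2

lemma exists_isStdCF_cfPair_eq {p q : ℤ} (hp : 0 ≤ p) (hq : 0 < q) (hpq : IsCoprime p q)
    (hq1 : q = 1 → 2 ≤ p) : ∃ s, IsStdCF (p / q :: s) ∧ cfPair (p / q :: s) = (p, q) := by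
  induction h : q.toNat using Nat.strong_induction_on generalizing p q with
  | _ n ih =>
  obtain rfl | hq2 : q = 1 ∨ 2 ≤ q := by omega
  · exact ⟨[], by simpa [isStdCF_singleton] using hq1 rfl, by simp [cfPair]⟩
  set r := p % q with hr
  have hr_eq : r = p - q * (p / q) := Int.emod_def p q
  have hqr : IsCoprime q r := by
    simpa [hr_eq, sub_eq_add_neg] using hpq.symm.add_mul_left_right (-(p / q))
  have hr0 : 0 < r := by
    refine (Int.emod_nonneg p hq.ne').lt_of_ne fun hr0 => ?_
    have := Int.isUnit_iff.mp (hqr.isUnit_of_dvd' dvd_rfl (by rw [hr, ← hr0]; exact dvd_zero q))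
    omega
  have hrq : r < q := Int.emod_lt_of_pos p hq
  obtain ⟨s, hs, hpair⟩ := ih r.toNat (by omega) hq.le hr0 hqr (fun _ => hq2) rfl
  refine ⟨q / r :: s, isStdCF_cons_cons.mpr ⟨Int.ediv_nonneg hp hq.le, ?_, hs⟩, ?_⟩
  · exact Int.le_ediv_of_mul_le hr0 (by omega)
  · simp only [cfPair] at hpair ⊢
    rw [cfFold_cons, hpair, Prod.mk.injEq]
    exact ⟨by linarith, rfl⟩

@[simp]
lemma cfVal_singleton (a : ℤ) : cfVal [a] = a := by
  simp [cfVal, cfPair, pairQ]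

lemma cfVal_cons (a : ℤ) {t : List ℤ} (ht : cfVal t ≠ 0) :
    cfVal (a :: t) = a + (cfVal t)⁻¹ := by
  simp only [cfVal, cfPair, pairQ, cfFold_cons, div_ne_zero_iff, Int.cast_ne_zero] at ht ⊢
  have : ((cfFold t (1, 0)).1 : ℚ) ≠ 0 := by exact_mod_cast ht.1
  push_cast
  field_simp

lemma IsStdCF.one_lt_cfVal_tail {a : ℤ} {t : List ℤ} (h : IsStdCF (a :: t)) (ht : t ≠ []) :
    1 < cfVal t := by
  induction t generalizing a with
  | nil => exact absurd rfl ht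
  | cons b s ih =>
    rcases s with _ | ⟨c, s⟩
    · have hb := isStdCF_singleton.mp (isStdCF_cons_cons.mp h).2.2
      simpa using (show (1 : ℚ) < b by exact_mod_cast (show (1 : ℤ) < b by omega))
    · obtain ⟨-, hb, hbs⟩ := isStdCF_cons_cons.mp h
      have hs := ih hbs (List.cons_ne_nil c s)
      rw [cfVal_cons b (by positivity)]
      have : (1 : ℚ) ≤ b := by exact_mod_cast hb
      have : 0 < (cfVal (c :: s))⁻¹ := by positivity
      linarith

lemma IsStdCF.cfVal_cons {a : ℤ} {t : List ℤ} (h : IsStdCF (a :: t)) (ht : t ≠ []) :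
    cfVal (a :: t) = a + (cfVal t)⁻¹ :=
  _root_.cfVal_cons a (zero_lt_one.trans (h.one_lt_cfVal_tail ht)).ne'

lemma IsStdCF.floor_cfVal {a : ℤ} {t : List ℤ} (h : IsStdCF (a :: t)) :
    ⌊cfVal (a :: t)⌋ = a := by
  obtain rfl | ht := eq_or_ne t []
  · simp
  · have h1 := h.one_lt_cfVal_tail ht
    rw [h.cfVal_cons ht, Int.floor_eq_iff]
    constructor
    · linarith [inv_pos.mpr (zero_lt_one.trans h1)]
    · linarith [inv_lt_one_of_one_lt₀ h1]

lemma IsStdCF.cfVal_ne_head {a : ℤ} {t : List ℤ} (h : IsStdCF (a :: t)) (ht : t ≠ []) :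
    cfVal (a :: t) ≠ a := by
  rw [h.cfVal_cons ht]
  simpa using (zero_lt_one.trans (h.one_lt_cfVal_tail ht)).ne'

lemma IsStdCF.of_cons {a : ℤ} {t : List ℤ} (h : IsStdCF (a :: t)) (ht : t ≠ []) :
    IsStdCF t := by
  obtain ⟨b, s, rfl⟩ := List.exists_cons_of_ne_nil ht
  exact (isStdCF_cons_cons.mp h).2.2

lemma IsStdCF.eq_of_cfVal_eq {l l' : List ℤ} (hl : IsStdCF l) (hl' : IsStdCF l')
    (hval : cfVal l = cfVal l') : l = l' := by
  induction l generalizing l' with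
  | nil => exact absurd rfl hl.1
  | cons a t ih =>
    rcases l' with _ | ⟨a', t'⟩
    · exact absurd rfl hl'.1
    obtain rfl : a = a' := by rw [← hl.floor_cfVal, ← hl'.floor_cfVal, hval]
    obtain rfl | ht := eq_or_ne t [] <;> obtain rfl | ht' := eq_or_ne t' []
    · rfl
    · exact absurd (hval.symm.trans (cfVal_singleton a)) (hl'.cfVal_ne_head ht')
    · exact absurd (hval.trans (cfVal_singleton a)) (hl.cfVal_ne_head ht)
    · rw [hl.cfVal_cons ht, hl'.cfVal_cons ht', add_right_inj, inv_inj] at hval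
      rw [ih (hl.of_cons ht) (hl'.of_cons ht') hval]

lemma cfPair_concat_add (l : List ℤ) (a c : ℤ) :
    cfPair (l ++ [a + c]) = c • cfPair l + cfPair (l ++ [a]) := by
  rw [cfPair_concat, cfPair_concat, cfPair, ← cfFold_smul_add]
  congr 1
  ext <;> simp [add_comm]

lemma isCoprime_cfPair (l : List ℤ) : IsCoprime (cfPair l).1 (cfPair l).2 :=
  IsCoprime.of_isUnit_pairDet (y := cfFold l (0, 1)) <| by
    rw [cfPair, pairDet_cfFold]
    simpa [pairDet] using isUnit_neg_one.pow _

lemma motherFun_cfVal {l : List ℤ} {a : ℤ} (h : IsStdCF (l ++ [a])) :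
    motherFun (cfVal (l ++ [a])) = cfVal (l ++ [a - 2]) := by
  have hex : ∃ m, IsMother (cfVal (l ++ [a])) m := ⟨_, l, a, h, rfl, rfl⟩
  obtain ⟨l₂, a₂, h₂, hx, hm⟩ := hex.choose_spec
  obtain ⟨rfl, ha⟩ := List.append_inj' (h₂.eq_of_cfVal_eq h hx.symm) rfl
  rw [motherFun, dif_pos hex, hm, List.singleton_inj.mp ha]

lemma exists_motherFun_eq {p q : ℤ} (hp : 0 < p) (hq : 0 < q) (hpq : IsCoprime p q)
    (hev : 2 ∣ p) : ∃ p' q' : ℤ, 0 ≤ p' ∧ 0 < q' ∧ IsCoprime p' q' ∧ 2 ∣ p' ∧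
      p' + q' < p + q ∧ motherFun (p / q) = p' / q' := by
  obtain ⟨k, rfl⟩ := hev
  obtain ⟨s, hs, hpair⟩ := exists_isStdCF_cfPair_eq hp.le hq hpq (fun _ => by omega)
  obtain ⟨l, a, hla⟩ := ((2 * k / q :: s).eq_nil_or_concat).resolve_left (List.cons_ne_nil _ _)
  rw [hla, List.concat_eq_append] at hs hpair
  have hl : ∀ b ∈ l, 0 ≤ b := fun b hb => hs.nonneg b (List.mem_append_left _ hb)
  have ha := hs.two_le_getLast
  have hsplit : ((2 * k, q) : ℤ × ℤ) = (2 : ℤ) • cfPair l + cfPair (l ++ [a - 2]) := by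
    rw [← hpair, ← cfPair_concat_add l (a - 2) 2, sub_add_cancel]
  have hmother : motherFun ((2 * k : ℤ) / q) = pairQ (cfPair (l ++ [a - 2])) := by
    have hval : ((2 * k : ℤ) : ℚ) / q = cfVal (l ++ [a]) := by rw [cfVal, hpair, pairQ]
    rw [hval, motherFun_cfVal hs, cfVal]
  have hM0 : 0 ≤ cfPair (l ++ [a - 2]) :=
    cfFold_nonneg (by simpa [or_imp, forall_and] using ⟨hl, by omega⟩) ⟨zero_le_one, le_rfl⟩
  have hP0 : 0 ≤ cfPair l := cfFold_nonneg hl ⟨zero_le_one, le_rfl⟩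
  have hMcop := isCoprime_cfPair (l ++ [a - 2])
  have hPcop := isCoprime_cfPair l
  generalize cfPair (l ++ [a - 2]) = M at *
  generalize cfPair l = P at *
  obtain ⟨hM1, hM2⟩ : 0 ≤ M.1 ∧ 0 ≤ M.2 := hM0
  obtain ⟨hP1, hP2⟩ : 0 ≤ P.1 ∧ 0 ≤ P.2 := hP0
  simp only [Prod.ext_iff, Prod.fst_add, Prod.snd_add, Prod.smul_fst, Prod.smul_snd,
    smul_eq_mul] at hsplit
  have hMeven : 2 ∣ M.1 := ⟨k - P.1, by omega⟩
  have hM2pos : 0 < M.2 := by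
    refine hM2.lt_of_ne fun h0 => ?_
    rw [← h0, isCoprime_zero_right, Int.isUnit_iff] at hMcop
    omega
  have hPpos : 0 < P.1 + P.2 := by
    by_contra! h
    obtain ⟨h1, h2⟩ : P.1 = 0 ∧ P.2 = 0 := by omega
    exact not_isCoprime_zero_zero (h1 ▸ h2 ▸ hPcop)
  exact ⟨M.1, M.2, hM1, hM2pos, hMcop, hMeven, by omega, hmother⟩

/-- For every irreducible fraction `p/q` with `p` even, `p ≥ 0`, `q > 0`,
some iterate of the mother map sends `p/q` to `0 = 0/1`, after at most
`p + q` steps. -/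
theorem mother_iterate_reaches_zero (p q : ℤ) (hp : 0 ≤ p) (hq : 0 < q)
    (hco : Int.gcd p q = 1) (hev : 2 ∣ p) :
    ∃ m : ℕ, (m : ℤ) ≤ p + q ∧ motherFun^[m] ((p : ℚ) / q) = 0 := by
  replace hco := Int.isCoprime_iff_gcd_eq_one.mpr hco
  induction h : (p + q).toNat using Nat.strong_induction_on generalizing p q with
  | _ n ih =>
  obtain rfl | hp := hp.eq_or_lt
  · exact ⟨0, by omega, by simp⟩
  obtain ⟨p', q', hp', hq', hco', hev', hlt, hM⟩ := exists_motherFun_eq hp hq hco hev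
  obtain ⟨m, hm, hm0⟩ := ih _ (by omega) p' q' hp' hq' hev' hco' rfl
  exact ⟨m + 1, by omega, by rwa [Function.iterate_succ_apply, hM]⟩
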